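/- Let Ω be a measurable space, let I be a countable set, let A = (A_i)_{i∈I} be an Ω^I-valued random variable with law P, and let (K_n)_{n≥0} be an increasing sequence of finite subsets of I with ⋃_{n≥0} K_n = I. If A is tail-trivial, then for every measurable set 𝒜 ⊆ Ω^I with P(A ∈ 𝒜) > 0, the quantity sup{ |P(A ∈ ℬ | A ∈ 𝒜) − P(A ∈ ℬ)| : ℬ a measurable set belonging to ℱ_{I∖K_n} } converges to 0 as n → ∞; equivalently, the total variation distance between the conditional distribution of (A_i)_{i∈I∖K_n} given the event {A ∈ 𝒜} and the unconditional distribution of (A_i)_{i∈I∖K_n} converges to zero as n → ∞. -/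

import Mathlib

open MeasureTheory Filter

/-- The sub-σ-algebra of the product σ-algebra on `I → Ω` consisting of events depending
only on the coordinates in `J`. -/
def cylAlg (Ω : Type*) [m : MeasurableSpace Ω] {I : Type*} (J : Set I) :
    MeasurableSpace (I → Ω) :=
  ⨆ i ∈ J, MeasurableSpace.comap (fun f => f i) m

/-- The tail σ-algebra of `I → Ω`: the intersection of the σ-algebras `cylAlg Ω J`
over all `J ⊆ I` with finite complement. -/
def tailAlg (Ω : Type*) [MeasurableSpace Ω] (I : Type*) : MeasurableSpace (I → Ω) :=
  ⨅ (J : Set I) (_ : Jᶜ.Finite), cylAlg Ω J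

/-! Pushing the law of `A` forward to `μ` on `I → Ω`, let `G n` be the σ-algebra of the
coordinates outside `K n`: a decreasing sequence whose intersection lies in the tail, hence is
`μ`-trivial. In `L²(μ)` the orthogonal projections of `𝟙_𝒜` onto the closed subspaces
`L²(G n)` converge to the projection onto their intersection (their orthogonal complements
increase). That limit is measurable for `⨅ n, G n`, hence a.e. equal to the constant `μ 𝒜`.
For `B ∈ G n`, `μ (𝒜 ∩ B) - μ 𝒜 * μ B` is the inner product of `𝟙_B` with the difference of
the `n`-th projection and its limit, so it is bounded by their distance, uniformly in `B`. -/

open Topology TopologicalSpace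

instance Submodule.HasOrthogonalProjection.iInf {𝕜 E : Type*} [RCLike 𝕜]
    [NormedAddCommGroup E] [InnerProductSpace 𝕜 E] [CompleteSpace E] {ι : Type*}
    (U : ι → Submodule 𝕜 E) [∀ i, (U i).HasOrthogonalProjection] :
    (⨅ i, U i).HasOrthogonalProjection := by
  rw [← iInf_congr fun i => (U i).orthogonal_orthogonal, iInf_orthogonal]
  infer_instance

theorem Submodule.starProjection_tendsto_iInf {𝕜 E : Type*} [RCLike 𝕜] [NormedAddCommGroup E]
    [InnerProductSpace 𝕜 E] [CompleteSpace E] {ι : Type*} [Preorder ι]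
    (U : ι → Submodule 𝕜 E) [∀ i, (U i).HasOrthogonalProjection] (hU : Antitone U) (x : E) :
    Tendsto (fun i => (U i).starProjection x) atTop (𝓝 ((⨅ i, U i).starProjection x)) := by
  have hclosure : (⨆ i, (U i)ᗮ).topologicalClosure = (⨅ i, U i)ᗮ := by
    rw [← orthogonal_orthogonal_eq_closure, ← iInf_orthogonal]
    simp only [orthogonal_orthogonal]
  have := starProjection_tendsto_closure_iSup (fun i => (U i)ᗮ)
    (fun i j hij => orthogonal_le (hU hij)) x
  simp only [hclosure, starProjection_orthogonal_val] at this
  simpa using (tendsto_const_nhds (x := x)).sub this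

namespace MeasureTheory

theorem AEStronglyMeasurable.iInf_of_antitone {X E : Type*} {m0 : MeasurableSpace X}
    {μ : Measure X} [TopologicalSpace E] [IsCompletelyMetrizableSpace E]
    [SecondCountableTopology E] [Nonempty E]
    {G : ℕ → MeasurableSpace X} (hG : Antitone G) {f : X → E}
    (hf : ∀ n, AEStronglyMeasurable[G n] f μ) : AEStronglyMeasurable[⨅ n, G n] f μ := by
  choose g hg hfg using hf
  set h : X → E := fun x => limUnder atTop (fun m => g m x)
  -- `h` ignores the first `k` versions `g m`, so it is `G k`-measurable for every `k`.
  have hh : ∀ k, StronglyMeasurable[G k] h := by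
    intro k
    have hshift : h = fun x => limUnder atTop (fun m => g (m + k) x) := by
      funext x
      change limUnder _ _ = limUnder _ ((fun m => g m x) ∘ (· + k))
      rw [limUnder, limUnder, ← Filter.map_map, Filter.map_add_atTop_eq_nat]
    let _ : MeasurableSpace X := G k
    rw [hshift]
    exact StronglyMeasurable.limUnder fun m => (hg (m + k)).mono (hG le_add_self)
  refine ⟨h, ?_, ?_⟩
  · borelize E
    refine Measurable.stronglyMeasurable fun t ht => ?_
    exact MeasurableSpace.measurableSet_iInf.mpr fun k => (hh k).measurable ht
  · filter_upwards [ae_all_iff.mpr hfg] with x hx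
    simp only [h, ← hx]
    exact tendsto_const_nhds.limUnder_eq.symm

theorem ae_eq_integral_of_forall_measure_eq_zero_or_one {X E : Type*}
    [NormedAddCommGroup E] [NormedSpace ℝ E] [CompleteSpace E] {m m0 : MeasurableSpace X}
    {μ : Measure X} [IsProbabilityMeasure μ] (hm : m ≤ m0)
    (h01 : ∀ B, MeasurableSet[m] B → μ B = 0 ∨ μ B = 1) {g : X → E}
    (hgm : AEStronglyMeasurable[m] g μ) (hg : Integrable g μ) :
    g =ᵐ[μ] fun _ => ∫ x, g x ∂μ := by
  have : SigmaFinite (μ.trim hm) := by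
    have := isFiniteMeasure_trim (μ := μ) hm
    infer_instance
  refine ae_eq_of_forall_setIntegral_eq_of_sigmaFinite' hm (fun _ _ _ => hg.integrableOn)
    (fun _ _ _ => integrableOn_const) (fun B hB _ => ?_) hgm aestronglyMeasurable_const
  rcases h01 B hB with h0 | h1
  · simp [setIntegral_measure_zero _ h0]
  · have hBae : μ.restrict B = μ := Measure.restrict_eq_self_of_ae_mem <| by
      rwa [ae_iff, ← Set.compl_def, prob_compl_eq_zero_iff (hm B hB)]
    simp [hBae]

theorem L2.setIntegral_starProjection_of_indicatorConstLp_mem {X 𝕜 : Type*}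
    [RCLike 𝕜] {mX : MeasurableSpace X} {μ : Measure X} {W : Submodule 𝕜 (Lp 𝕜 2 μ)}
    [W.HasOrthogonalProjection] {B : Set X} (hB : MeasurableSet B) (hμB : μ B ≠ ⊤)
    (hBW : indicatorConstLp 2 hB hμB (1 : 𝕜) ∈ W) (f : Lp 𝕜 2 μ) :
    ∫ x in B, W.starProjection f x ∂μ = ∫ x in B, f x ∂μ := by
  rw [← inner_indicatorConstLp_one hB hμB, ← inner_indicatorConstLp_one hB hμB,
    ← Submodule.inner_starProjection_left_eq_right, Submodule.starProjection_eq_self_iff.mpr hBW]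

variable {X : Type*} {mX : MeasurableSpace X} {μ : Measure X} [IsProbabilityMeasure μ]
  {G : ℕ → MeasurableSpace X}

theorem starProjection_iInf_lpMeas_ae_eq_integral [∀ n, Fact (G n ≤ mX)] (hG : Antitone G)
    (htriv : ∀ B, MeasurableSet[⨅ n, G n] B → μ B = 0 ∨ μ B = 1) (f : Lp ℝ 2 μ) :
    ((⨅ n, lpMeas ℝ ℝ (G n) 2 μ).starProjection f : X → ℝ) =ᵐ[μ] fun _ => ∫ x, f x ∂μ := by
  set q := (⨅ n, lpMeas ℝ ℝ (G n) 2 μ).starProjection f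
  have hqm : AEStronglyMeasurable[⨅ n, G n] q μ := by
    refine AEStronglyMeasurable.iInf_of_antitone hG fun n => ?_
    have := (Submodule.mem_iInf fun n => lpMeas ℝ ℝ (G n) 2 μ).mp
        (Submodule.starProjection_apply_mem _ f) n
    exact mem_lpMeas_iff_aestronglyMeasurable.mp this
  have huniv : indicatorConstLp 2 MeasurableSet.univ (measure_ne_top μ _) (1 : ℝ) ∈
      ⨅ n, lpMeas ℝ ℝ (G n) 2 μ :=
    (Submodule.mem_iInf _).mpr fun n =>
      mem_lpMeas_indicatorConstLp (Fact.out : G n ≤ mX) MeasurableSet.univ _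
  have hint : ∫ x, q x ∂μ = ∫ x, f x ∂μ := by
    have := L2.setIntegral_starProjection_of_indicatorConstLp_mem MeasurableSet.univ _ huniv f
    rwa [Measure.restrict_univ] at this
  rw [← hint]
  exact ae_eq_integral_of_forall_measure_eq_zero_or_one ((iInf_le G 0).trans Fact.out) htriv hqm
    ((Lp.memLp q).integrable one_le_two)

theorem exists_tendsto_abs_measureReal_inter_sub_mul_le (hGle : ∀ n, G n ≤ mX)
    (hG : Antitone G) (htriv : ∀ B, MeasurableSet[⨅ n, G n] B → μ B = 0 ∨ μ B = 1)
    {s : Set X} (hs : MeasurableSet s) :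
    ∃ ε : ℕ → ℝ, Tendsto ε atTop (𝓝 0) ∧ ∀ n B, MeasurableSet[G n] B →
      |μ.real (s ∩ B) - μ.real s * μ.real B| ≤ ε n := by
  have _ : ∀ n, Fact (G n ≤ mX) := fun n => ⟨hGle n⟩
  set V : ℕ → Submodule ℝ (Lp ℝ 2 μ) := fun n => lpMeas ℝ ℝ (G n) 2 μ
  have hV : Antitone V := fun n m hnm g hg => by
    rw [mem_lpMeas_iff_aestronglyMeasurable] at hg ⊢
    exact hg.mono (hG hnm)
  set F := indicatorConstLp 2 hs (measure_ne_top μ s) (1 : ℝ)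
  set q := (⨅ n, V n).starProjection F
  have hq : (q : X → ℝ) =ᵐ[μ] fun _ => μ.real s := by
    have := starProjection_iInf_lpMeas_ae_eq_integral hG htriv F
    rwa [integral_indicatorConstLp, smul_eq_mul, mul_one] at this
  refine ⟨fun n => ‖(V n).starProjection F - q‖, ?_, fun n B hB => ?_⟩
  · exact tendsto_iff_norm_sub_tendsto_zero.mp (Submodule.starProjection_tendsto_iInf V hV F)
  have hBm : MeasurableSet B := hGle n B hB
  set indB := indicatorConstLp 2 hBm (measure_ne_top μ B) (1 : ℝ)
  have hp : inner ℝ indB ((V n).starProjection F) = μ.real (s ∩ B) := by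
    have hBV : indB ∈ V n := mem_lpMeas_indicatorConstLp (hGle n) hB _
    rw [L2.inner_indicatorConstLp_one,
      L2.setIntegral_starProjection_of_indicatorConstLp_mem hBm _ hBV,
      setIntegral_indicatorConstLp hBm, smul_eq_mul, mul_one]
  have hq' : inner ℝ indB q = μ.real s * μ.real B := by
    rw [L2.inner_indicatorConstLp_one, setIntegral_congr_ae hBm (hq.mono fun x hx _ => hx),
      setIntegral_const, smul_eq_mul, mul_comm]
  have hnorm : ‖indB‖ ≤ 1 := by
    refine norm_indicatorConstLp_le.trans ?_
    rw [norm_one, one_mul]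
    exact Real.rpow_le_one measureReal_nonneg measureReal_le_one (by norm_num)
  calc |μ.real (s ∩ B) - μ.real s * μ.real B|
      = |inner ℝ indB ((V n).starProjection F - q)| := by rw [inner_sub_right, hp, hq']
    _ ≤ ‖indB‖ * ‖(V n).starProjection F - q‖ := abs_real_inner_le_norm _ _
    _ ≤ ‖(V n).starProjection F - q‖ := mul_le_of_le_one_left (norm_nonneg _) hnorm

end MeasureTheory

theorem tendsto_iSup_abs_of_abs_le {ι : Type*} {p : ℕ → ι → Prop} {f : ℕ → ι → ℝ}
    {ε : ℕ → ℝ} (hε : Tendsto ε atTop (𝓝 0)) (hf : ∀ n i, p n i → |f n i| ≤ ε n) :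
    Tendsto (fun n => ⨆ (i) (_ : p n i), |f n i|) atTop (𝓝 0) := by
  refine squeeze_zero (g := fun n => max (ε n) 0) (fun n => ?_) (fun n => ?_) ?_
  · exact Real.iSup_nonneg fun i => Real.iSup_nonneg fun _ => abs_nonneg _
  · exact Real.iSup_le (fun i => Real.iSup_le (fun hi => (hf n i hi).trans (le_max_left _ _))
      (le_max_right _ _)) (le_max_right _ _)
  · simpa using hε.max (tendsto_const_nhds (x := (0 : ℝ)))

section cylinder

variable {Ω : Type*} [MeasurableSpace Ω] {I : Type*}

theorem cylAlg_le_pi (J : Set I) : cylAlg Ω J ≤ MeasurableSpace.pi :=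
  iSup₂_le fun i _ => (measurable_pi_apply i).comap_le

theorem cylAlg_mono {J J' : Set I} (h : J ⊆ J') : cylAlg Ω J ≤ cylAlg Ω J' :=
  biSup_mono h

theorem iInf_cylAlg_compl_le_tailAlg {K : ℕ → Finset I} (hmono : Monotone K)
    (hcov : (⋃ n, (K n : Set I)) = Set.univ) :
    ⨅ n, cylAlg Ω ((K n : Set I)ᶜ) ≤ tailAlg Ω I := by
  refine le_iInf₂ fun J hJ => ?_
  have hev : ∀ j ∈ Jᶜ, ∀ᶠ n in atTop, j ∈ K n := fun j _ => by
    obtain ⟨n₀, hn₀⟩ := Set.mem_iUnion.mp (hcov ▸ Set.mem_univ j)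
    exact eventually_atTop.mpr ⟨n₀, fun m hm => hmono hm hn₀⟩
  obtain ⟨n, hn⟩ := (hJ.eventually_all.mpr hev).exists
  exact (iInf_le _ n).trans (cylAlg_mono fun j hj => by_contra fun hjJ => hj (hn j hjJ))

end cylinder

theorem stmt2_general {Ω : Type*} [MeasurableSpace Ω] {I : Type*}
    {α : Type*} [MeasurableSpace α] (P : Measure α) [IsProbabilityMeasure P]
    (A : α → I → Ω) (hA : Measurable A)
    (K : ℕ → Finset I) (hmono : Monotone K) (hcov : (⋃ n, (K n : Set I)) = Set.univ)
    (htriv : ∀ S : Set (I → Ω), MeasurableSet[tailAlg Ω I] S →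
      P (A ⁻¹' S) = 0 ∨ P (A ⁻¹' S) = 1)
    (𝒜 : Set (I → Ω)) (h𝒜 : MeasurableSet 𝒜) (hpos : 0 < P (A ⁻¹' 𝒜)) :
    Tendsto
      (fun n => ⨆ (B : Set (I → Ω)) (_ : MeasurableSet[cylAlg Ω ((K n : Set I)ᶜ)] B),
        |(P (A ⁻¹' 𝒜 ∩ A ⁻¹' B)).toReal / (P (A ⁻¹' 𝒜)).toReal - (P (A ⁻¹' B)).toReal|)
      atTop (nhds 0) := by
  set μ := P.map A
  set G : ℕ → MeasurableSpace (I → Ω) := fun n => cylAlg Ω ((K n : Set I)ᶜ)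
  have _ : IsProbabilityMeasure μ := Measure.isProbabilityMeasure_map hA.aemeasurable
  have hmap : ∀ S, MeasurableSet S → (P (A ⁻¹' S)).toReal = μ.real S := fun S hS => by
    rw [measureReal_def, Measure.map_apply hA hS]
  have hμ𝒜 : 0 < μ.real 𝒜 := by
    rw [← hmap 𝒜 h𝒜]
    exact ENNReal.toReal_pos hpos.ne' (measure_ne_top P _)
  have hG : Antitone G := fun m n hmn =>
    cylAlg_mono (Set.compl_subset_compl.mpr (by exact_mod_cast hmono hmn))
  have htriv' : ∀ B, MeasurableSet[⨅ n, G n] B → μ B = 0 ∨ μ B = 1 := fun B hB => by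
    have hBm : MeasurableSet B := cylAlg_le_pi _ B (iInf_le G 0 B hB)
    rw [Measure.map_apply hA hBm]
    exact htriv B (iInf_cylAlg_compl_le_tailAlg hmono hcov B hB)
  obtain ⟨ε, hε, hbound⟩ :=
    exists_tendsto_abs_measureReal_inter_sub_mul_le (fun n => cylAlg_le_pi _) hG htriv' h𝒜
  refine tendsto_iSup_abs_of_abs_le (by simpa using hε.div_const (μ.real 𝒜)) fun n B hB => ?_
  have hBm := cylAlg_le_pi _ B hB
  rw [← Set.preimage_inter, hmap _ (h𝒜.inter hBm), hmap _ h𝒜, hmap _ hBm,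
    div_sub' hμ𝒜.ne', abs_div, abs_of_pos hμ𝒜]
  exact div_le_div_of_nonneg_right (hbound n B hB) hμ𝒜.le

theorem stmt2 {Ω : Type*} [MeasurableSpace Ω] {I : Type*} [Countable I]
    {α : Type*} [MeasurableSpace α] (P : Measure α) [IsProbabilityMeasure P]
    (A : α → I → Ω) (hA : Measurable A)
    (K : ℕ → Finset I) (hmono : Monotone K) (hcov : (⋃ n, (K n : Set I)) = Set.univ)
    (htriv : ∀ S : Set (I → Ω), MeasurableSet[tailAlg Ω I] S →
      P (A ⁻¹' S) = 0 ∨ P (A ⁻¹' S) = 1)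
    (𝒜 : Set (I → Ω)) (h𝒜 : MeasurableSet 𝒜) (hpos : 0 < P (A ⁻¹' 𝒜)) :
    Tendsto
      (fun n => ⨆ (B : Set (I → Ω)) (_ : MeasurableSet[cylAlg Ω ((K n : Set I)ᶜ)] B),
        |(P (A ⁻¹' 𝒜 ∩ A ⁻¹' B)).toReal / (P (A ⁻¹' 𝒜)).toReal - (P (A ⁻¹' B)).toReal|)
      atTop (nhds 0) :=
  stmt2_general P A hA K hmono hcov htriv 𝒜 h𝒜 hpos
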